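/- arXiv:math/9508207 — 3 statements merged into one kernel-verified Lean document; each statement's English description precedes it below -/
import Mathlib

section
/- For the interval-swapping transformation φ_h^{(i)}, the Haar function at the fork root transforms as χ_h^{(i)} ∘ φ_h^{(i)} = (χ_{h+1}^{(2i-1)} + χ_{h+1}^{(2i)})/√2 on [0,1). -/
open MeasureTheory Real Set
open scoped Classical

noncomputable section

/-- The dyadic interval `Δ_k^{(j)} = [(j-1)/2^k, j/2^k)`. -/
def dyadic (k : ℕ) (j : ℤ) : Set ℝ := Set.Ico (((j : ℝ) - 1) / 2 ^ k) ((j : ℝ) / 2 ^ k)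

/-- The Haar function `χ_k^{(j)}`. -/
def haar (k : ℕ) (j : ℤ) (t : ℝ) : ℝ :=
  if t ∈ dyadic k (2 * j - 1) then (2 : ℝ) ^ (((k : ℝ) - 1) / 2)
  else if t ∈ dyadic k (2 * j) then -(2 : ℝ) ^ (((k : ℝ) - 1) / 2)
  else 0

/-- Membership in the dyadic tree `𝔻`. -/
def memD (kj : ℕ × ℤ) : Prop := 1 ≤ kj.1 ∧ 1 ≤ kj.2 ∧ kj.2 ≤ 2 ^ (kj.1 - 1)

/-- The finite dyadic tree `𝔻_m^n`. -/
def Dtree (m n : ℕ) : Finset (ℕ × ℤ) :=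
  (Finset.Icc m n).biUnion fun k => (Finset.Icc (1 : ℤ) (2 ^ (k - 1))).image fun j => (k, j)

/-- Number of indices of `F` lying on the branch through `t`. -/
def branchCount (F : Finset (ℕ × ℤ)) (t : ℝ) : ℕ :=
  (F.filter fun kj => t ∈ dyadic (kj.1 - 1) kj.2).card

/-- The local height of a finite index set. -/
def lh (F : Finset (ℕ × ℤ)) : ℕ :=
  sSup {m | ∃ t ∈ Set.Ico (0 : ℝ) 1, branchCount F t = m}

/-- The transformation `φ_h^{(i)}` interchanging `Δ_{h+1}^{(4i-2)}` and `Δ_{h+1}^{(4i-1)}`. -/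
def phi (h : ℕ) (i : ℤ) (t : ℝ) : ℝ :=
  if t ∈ dyadic (h + 1) (4 * i - 2) then t + 1 / 2 ^ (h + 1)
  else if t ∈ dyadic (h + 1) (4 * i - 1) then t - 1 / 2 ^ (h + 1)
  else t

/-- The Haar type ideal norm `τ(T | ℋ(F))`. -/
def tau {X Y : Type*} [NormedAddCommGroup X] [NormedSpace ℝ X]
    [NormedAddCommGroup Y] [NormedSpace ℝ Y]
    (T : X →L[ℝ] Y) (F : Finset (ℕ × ℤ)) : ℝ :=
  sInf {c : ℝ | 0 ≤ c ∧ ∀ x : ℕ × ℤ → X,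
    Real.sqrt (∫ t in Set.Ico (0 : ℝ) 1, ‖∑ kj ∈ F, haar kj.1 kj.2 t • T (x kj)‖ ^ 2)
      ≤ c * Real.sqrt (∑ kj ∈ F, ‖x kj‖ ^ 2)}

end

lemma mem_dyadic_iff {k : ℕ} {j : ℤ} {t : ℝ} :
    t ∈ dyadic k j ↔ ((j : ℝ) - 1) ≤ t * 2 ^ k ∧ t * 2 ^ k < (j : ℝ) := by
  have hp : (0:ℝ) < 2 ^ k := by positivity
  simp [dyadic, Set.mem_Ico, div_le_iff₀ hp, lt_div_iff₀ hp]

lemma haar_pos {k : ℕ} {j : ℤ} {t : ℝ}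
    (h1 : (2*(j:ℝ) - 2) ≤ t * 2 ^ k) (h2 : t * 2 ^ k < 2*(j:ℝ) - 1) :
    haar k j t = (2:ℝ) ^ (((k:ℝ) - 1) / 2) := by
  rw [haar, if_pos]
  rw [mem_dyadic_iff]; push_cast; constructor <;> linarith

lemma haar_neg {k : ℕ} {j : ℤ} {t : ℝ}
    (h1 : (2*(j:ℝ) - 1) ≤ t * 2 ^ k) (h2 : t * 2 ^ k < 2*(j:ℝ)) :
    haar k j t = -(2:ℝ) ^ (((k:ℝ) - 1) / 2) := by
  rw [haar, if_neg, if_pos]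
  · rw [mem_dyadic_iff]; push_cast; constructor <;> linarith
  · rw [mem_dyadic_iff]; push_cast; rintro ⟨a, b⟩; linarith

lemma haar_zero {k : ℕ} {j : ℤ} {t : ℝ}
    (hc : t * 2 ^ k < 2*(j:ℝ) - 2 ∨ 2*(j:ℝ) ≤ t * 2 ^ k) :
    haar k j t = 0 := by
  rw [haar, if_neg, if_neg] <;> rw [mem_dyadic_iff] <;> push_cast <;>
    rintro ⟨a, b⟩ <;> rcases hc with hc | hc <;> linarith

lemma phi_self {h : ℕ} {i : ℤ} {t : ℝ}
    (hc : t * 2 ^ (h+1) < 4*(i:ℝ) - 3 ∨ 4*(i:ℝ) - 1 ≤ t * 2 ^ (h+1)) :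
    phi h i t = t := by
  rw [phi, if_neg, if_neg] <;> rw [mem_dyadic_iff] <;> push_cast <;>
    rintro ⟨a, b⟩ <;> rcases hc with hc | hc <;> linarith

lemma phi_add {h : ℕ} {i : ℤ} {t : ℝ}
    (h1 : 4*(i:ℝ) - 3 ≤ t * 2 ^ (h+1)) (h2 : t * 2 ^ (h+1) < 4*(i:ℝ) - 2) :
    phi h i t = t + 1 / 2 ^ (h+1) := by
  rw [phi, if_pos]
  rw [mem_dyadic_iff]; push_cast; constructor <;> linarith

lemma phi_sub {h : ℕ} {i : ℤ} {t : ℝ}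
    (h1 : 4*(i:ℝ) - 2 ≤ t * 2 ^ (h+1)) (h2 : t * 2 ^ (h+1) < 4*(i:ℝ) - 1) :
    phi h i t = t - 1 / 2 ^ (h+1) := by
  rw [phi, if_neg, if_pos]
  · rw [mem_dyadic_iff]; push_cast; constructor <;> linarith
  · rw [mem_dyadic_iff]; push_cast; rintro ⟨a, b⟩; linarith

lemma value_eq (h : ℕ) :
    ((2:ℝ) ^ (((h:ℝ) + 1 - 1) / 2)) / Real.sqrt 2 = (2:ℝ) ^ (((h:ℝ) - 1) / 2) := by
  rw [Real.sqrt_eq_rpow, ← Real.rpow_sub two_pos]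
  congr 1
  ring

theorem haar_comp_phi_root (h : ℕ) (hh : 1 ≤ h) (i : ℤ)
    (hi1 : 1 ≤ i) (hi2 : i ≤ 2 ^ (h - 1)) :
    ∀ t ∈ Set.Ico (0 : ℝ) 1,
      haar h i (phi h i t) =
        (haar (h + 1) (2 * i - 1) t + haar (h + 1) (2 * i) t) / Real.sqrt 2 := by
  intro t ht
  have key : t * 2 ^ (h + 1) = 2 * (t * 2 ^ h) := by ring
  have hne : ((2 : ℝ) ^ (h + 1)) ≠ 0 := by positivity
  have eadd : (t + 1 / 2 ^ (h + 1)) * 2 ^ h * 2 = t * 2 ^ (h + 1) + 1 := by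
    field_simp; ring
  have esub : (t - 1 / 2 ^ (h + 1)) * 2 ^ h * 2 = t * 2 ^ (h + 1) - 1 := by
    field_simp; ring
  rcases lt_or_ge (t * 2 ^ (h + 1)) (4 * (i : ℝ) - 4) with c1 | c1
  · rw [phi_self (Or.inl (by linarith))]
    have A : haar h i t = 0 := haar_zero (Or.inl (by linarith))
    have B : haar (h + 1) (2 * i - 1) t = 0 :=
      haar_zero (Or.inl (by push_cast; linarith))
    have C : haar (h + 1) (2 * i) t = 0 :=
      haar_zero (Or.inl (by push_cast; linarith))
    rw [A, B, C]; norm_num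
  rcases lt_or_ge (t * 2 ^ (h + 1)) (4 * (i : ℝ) - 3) with c2 | c2
  · rw [phi_self (Or.inl c2)]
    have A : haar h i t = (2 : ℝ) ^ (((h : ℝ) - 1) / 2) :=
      haar_pos (by linarith) (by linarith)
    have B : haar (h + 1) (2 * i - 1) t = (2 : ℝ) ^ ((((h + 1 : ℕ) : ℝ) - 1) / 2) :=
      haar_pos (by push_cast; linarith) (by push_cast; linarith)
    have C : haar (h + 1) (2 * i) t = 0 :=
      haar_zero (Or.inl (by push_cast; linarith))
    rw [A, B, C, add_zero]; push_cast
    exact (value_eq h).symm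
  rcases lt_or_ge (t * 2 ^ (h + 1)) (4 * (i : ℝ) - 2) with c3 | c3
  · rw [phi_add c2 c3]
    have A : haar h i (t + 1 / 2 ^ (h + 1)) = -(2 : ℝ) ^ (((h : ℝ) - 1) / 2) :=
      haar_neg (by linarith) (by linarith)
    have B : haar (h + 1) (2 * i - 1) t = -(2 : ℝ) ^ ((((h + 1 : ℕ) : ℝ) - 1) / 2) :=
      haar_neg (by push_cast; linarith) (by push_cast; linarith)
    have C : haar (h + 1) (2 * i) t = 0 :=
      haar_zero (Or.inl (by push_cast; linarith))
    rw [A, B, C, add_zero, neg_div]; push_cast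
    rw [value_eq]
  rcases lt_or_ge (t * 2 ^ (h + 1)) (4 * (i : ℝ) - 1) with c4 | c4
  · rw [phi_sub c3 c4]
    have A : haar h i (t - 1 / 2 ^ (h + 1)) = (2 : ℝ) ^ (((h : ℝ) - 1) / 2) :=
      haar_pos (by linarith) (by linarith)
    have B : haar (h + 1) (2 * i - 1) t = 0 :=
      haar_zero (Or.inr (by push_cast; linarith))
    have C : haar (h + 1) (2 * i) t = (2 : ℝ) ^ ((((h + 1 : ℕ) : ℝ) - 1) / 2) :=
      haar_pos (by push_cast; linarith) (by push_cast; linarith)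
    rw [A, B, C, zero_add]; push_cast
    exact (value_eq h).symm
  rcases lt_or_ge (t * 2 ^ (h + 1)) (4 * (i : ℝ)) with c5 | c5
  · rw [phi_self (Or.inr c4)]
    have A : haar h i t = -(2 : ℝ) ^ (((h : ℝ) - 1) / 2) :=
      haar_neg (by linarith) (by linarith)
    have B : haar (h + 1) (2 * i - 1) t = 0 :=
      haar_zero (Or.inr (by push_cast; linarith))
    have C : haar (h + 1) (2 * i) t = -(2 : ℝ) ^ ((((h + 1 : ℕ) : ℝ) - 1) / 2) :=
      haar_neg (by push_cast; linarith) (by push_cast; linarith)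
    rw [A, B, C, zero_add, neg_div]; push_cast
    rw [value_eq]
  · rw [phi_self (Or.inr c4)]
    have A : haar h i t = 0 := haar_zero (Or.inr (by linarith))
    have B : haar (h + 1) (2 * i - 1) t = 0 :=
      haar_zero (Or.inr (by push_cast; linarith))
    have C : haar (h + 1) (2 * i) t = 0 :=
      haar_zero (Or.inr (by push_cast; linarith))
    rw [A, B, C]; norm_num
end

section
/- For the interval-swapping transformation φ_h^{(i)}, the right-successor Haar function transforms as χ_{h+1}^{(2i)} ∘ φ_h^{(i)} = (√2·χ_h^{(i)} − χ_{h+1}^{(2i-1)} + χ_{h+1}^{(2i)})/2 on [0,1). -/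
open MeasureTheory Real Set
open scoped Classical

lemma mem_dyadic' {k : ℕ} {j : ℤ} {x : ℝ} (h1 : (j:ℝ)-1 ≤ x * 2^k)
    (h2 : x * 2^k < (j:ℝ)) : x ∈ dyadic k j :=
  ⟨(div_le_iff₀ (by positivity)).2 h1, (lt_div_iff₀ (by positivity)).2 h2⟩

lemma notMem_dyadic_left {k : ℕ} {j : ℤ} {x : ℝ} (h : x * 2^k < (j:ℝ)-1) :
    x ∉ dyadic k j := fun hm =>
  absurd ((div_le_iff₀ (by positivity)).1 hm.1) (not_le.2 h)

lemma notMem_dyadic_right {k : ℕ} {j : ℤ} {x : ℝ} (h : (j:ℝ) ≤ x * 2^k) :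
    x ∉ dyadic k j := fun hm =>
  absurd ((lt_div_iff₀ (by positivity)).1 hm.2) (not_lt.2 h)

theorem haar_comp_phi_right (h : ℕ) (hh : 1 ≤ h) (i : ℤ)
    (hi1 : 1 ≤ i) (hi2 : i ≤ 2 ^ (h - 1)) :
    ∀ t ∈ Set.Ico (0 : ℝ) 1,
      haar (h + 1) (2 * i) (phi h i t) =
        (Real.sqrt 2 * haar h i t - haar (h + 1) (2 * i - 1) t
          + haar (h + 1) (2 * i) t) / 2 := by
  intro t _
  have hE : (0:ℝ) < 2 ^ (h+1) := by positivity
  have hv : (0:ℝ) < 1 / 2 ^ (h+1) := by positivity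
  have eh : t * 2^(h+1) = 2 * (t * 2^h) := by rw [pow_succ]; ring
  have ea : (t + 1/2^(h+1)) * 2^(h+1) = t * 2^(h+1) + 1 := by field_simp
  have eb : (t - 1/2^(h+1)) * 2^(h+1) = t * 2^(h+1) - 1 := by field_simp
  have key : Real.sqrt 2 * (2:ℝ)^(((h:ℝ)-1)/2) = (2:ℝ)^(((h:ℝ)+1-1)/2) := by
    rw [Real.sqrt_eq_rpow, ← Real.rpow_add (by norm_num : (0:ℝ) < 2)]
    ring_nf
  rcases lt_or_ge (t * 2^(h+1)) (4*(i:ℝ)-4) with c | c0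
  · -- left of the support
    have p1 : t ∉ dyadic (h+1) (4*i-2) := notMem_dyadic_left (by push_cast; linarith)
    have p2 : t ∉ dyadic (h+1) (4*i-1) := notMem_dyadic_left (by push_cast; linarith)
    have hphi : phi h i t = t := by rw [phi, if_neg p1, if_neg p2]
    have m1 : t ∉ dyadic (h+1) (2*(2*i)-1) := notMem_dyadic_left (by push_cast; linarith)
    have m2 : t ∉ dyadic (h+1) (2*(2*i)) := notMem_dyadic_left (by push_cast; linarith)
    have m3 : t ∉ dyadic (h+1) (2*(2*i-1)-1) := notMem_dyadic_left (by push_cast; linarith)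
    have m4 : t ∉ dyadic (h+1) (2*(2*i-1)) := notMem_dyadic_left (by push_cast; linarith)
    have m5 : t ∉ dyadic h (2*i-1) := notMem_dyadic_left (by push_cast; linarith)
    have m6 : t ∉ dyadic h (2*i) := notMem_dyadic_left (by push_cast; linarith)
    simp only [haar, hphi, m1, m2, m3, m4, m5, m6, if_false]
    norm_num
  · rcases lt_or_ge (t * 2^(h+1)) (4*(i:ℝ)-3) with c1 | c1
    · -- first quarter
      have p1 : t ∉ dyadic (h+1) (4*i-2) := notMem_dyadic_left (by push_cast; linarith)
      have p2 : t ∉ dyadic (h+1) (4*i-1) := notMem_dyadic_left (by push_cast; linarith)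
      have hphi : phi h i t = t := by rw [phi, if_neg p1, if_neg p2]
      have m1 : t ∉ dyadic (h+1) (2*(2*i)-1) := notMem_dyadic_left (by push_cast; linarith)
      have m2 : t ∉ dyadic (h+1) (2*(2*i)) := notMem_dyadic_left (by push_cast; linarith)
      have m3 : t ∈ dyadic (h+1) (2*(2*i-1)-1) :=
        mem_dyadic' (by push_cast; linarith) (by push_cast; linarith)
      have m5 : t ∈ dyadic h (2*i-1) :=
        mem_dyadic' (by push_cast; linarith) (by push_cast; linarith)
      simp only [haar, hphi, m1, m2, m3, m5, if_true, if_false]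
      push_cast
      first | linear_combination (-(1:ℝ)/2) * key | linear_combination ((1:ℝ)/2) * key
    · rcases lt_or_ge (t * 2^(h+1)) (4*(i:ℝ)-2) with c2 | c2
      · -- second quarter: phi t = t + 1/2^(h+1)
        have p1 : t ∈ dyadic (h+1) (4*i-2) :=
          mem_dyadic' (by push_cast; linarith) (by push_cast; linarith)
        have hphi : phi h i t = t + 1/2^(h+1) := by rw [phi, if_pos p1]
        have m1 : t + 1/2^(h+1) ∈ dyadic (h+1) (2*(2*i)-1) :=
          mem_dyadic' (by push_cast; linarith) (by push_cast; linarith)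
        have m3 : t ∉ dyadic (h+1) (2*(2*i-1)-1) := notMem_dyadic_right (by push_cast; linarith)
        have m4 : t ∈ dyadic (h+1) (2*(2*i-1)) :=
          mem_dyadic' (by push_cast; linarith) (by push_cast; linarith)
        have m5 : t ∈ dyadic h (2*i-1) :=
          mem_dyadic' (by push_cast; linarith) (by push_cast; linarith)
        have m6 : t ∉ dyadic (h+1) (2*(2*i)-1) := notMem_dyadic_left (by push_cast; linarith)
        have m7 : t ∉ dyadic (h+1) (2*(2*i)) := notMem_dyadic_left (by push_cast; linarith)
        simp only [haar, hphi, m1, m3, m4, m5, m6, m7, if_true, if_false]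
        push_cast
        first | linear_combination (-(1:ℝ)/2) * key | linear_combination ((1:ℝ)/2) * key
      · rcases lt_or_ge (t * 2^(h+1)) (4*(i:ℝ)-1) with c3 | c3
        · -- third quarter: phi t = t - 1/2^(h+1)
          have p1 : t ∉ dyadic (h+1) (4*i-2) := notMem_dyadic_right (by push_cast; linarith)
          have p2 : t ∈ dyadic (h+1) (4*i-1) :=
            mem_dyadic' (by push_cast; linarith) (by push_cast; linarith)
          have hphi : phi h i t = t - 1/2^(h+1) := by rw [phi, if_neg p1, if_pos p2]
          have m1 : t - 1/2^(h+1) ∉ dyadic (h+1) (2*(2*i)-1) :=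
            notMem_dyadic_left (by push_cast; linarith)
          have m2 : t - 1/2^(h+1) ∉ dyadic (h+1) (2*(2*i)) :=
            notMem_dyadic_left (by push_cast; linarith)
          have m3 : t ∉ dyadic (h+1) (2*(2*i-1)-1) := notMem_dyadic_right (by push_cast; linarith)
          have m4 : t ∉ dyadic (h+1) (2*(2*i-1)) := notMem_dyadic_right (by push_cast; linarith)
          have m5 : t ∉ dyadic h (2*i-1) := notMem_dyadic_right (by push_cast; linarith)
          have m6 : t ∈ dyadic h (2*i) :=
            mem_dyadic' (by push_cast; linarith) (by push_cast; linarith)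
          have m7 : t ∈ dyadic (h+1) (2*(2*i)-1) :=
            mem_dyadic' (by push_cast; linarith) (by push_cast; linarith)
          simp only [haar, hphi, m1, m2, m3, m4, m5, m6, m7, if_true, if_false]
          push_cast
          first | linear_combination (-(1:ℝ)/2) * key | linear_combination ((1:ℝ)/2) * key
        · rcases lt_or_ge (t * 2^(h+1)) (4*(i:ℝ)) with c4 | c4
          · -- fourth quarter
            have p1 : t ∉ dyadic (h+1) (4*i-2) := notMem_dyadic_right (by push_cast; linarith)
            have p2 : t ∉ dyadic (h+1) (4*i-1) := notMem_dyadic_right (by push_cast; linarith)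
            have hphi : phi h i t = t := by rw [phi, if_neg p1, if_neg p2]
            have m1 : t ∉ dyadic (h+1) (2*(2*i)-1) := notMem_dyadic_right (by push_cast; linarith)
            have m2 : t ∈ dyadic (h+1) (2*(2*i)) :=
              mem_dyadic' (by push_cast; linarith) (by push_cast; linarith)
            have m3 : t ∉ dyadic (h+1) (2*(2*i-1)-1) :=
              notMem_dyadic_right (by push_cast; linarith)
            have m4 : t ∉ dyadic (h+1) (2*(2*i-1)) := notMem_dyadic_right (by push_cast; linarith)
            have m5 : t ∉ dyadic h (2*i-1) := notMem_dyadic_right (by push_cast; linarith)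
            have m6 : t ∈ dyadic h (2*i) :=
              mem_dyadic' (by push_cast; linarith) (by push_cast; linarith)
            simp only [haar, hphi, m1, m2, m3, m4, m5, m6, if_true, if_false]
            push_cast
            first | linear_combination (-(1:ℝ)/2) * key | linear_combination ((1:ℝ)/2) * key
          · -- right of the support
            have p1 : t ∉ dyadic (h+1) (4*i-2) := notMem_dyadic_right (by push_cast; linarith)
            have p2 : t ∉ dyadic (h+1) (4*i-1) := notMem_dyadic_right (by push_cast; linarith)
            have hphi : phi h i t = t := by rw [phi, if_neg p1, if_neg p2]
            have m1 : t ∉ dyadic (h+1) (2*(2*i)-1) := notMem_dyadic_right (by push_cast; linarith)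
            have m2 : t ∉ dyadic (h+1) (2*(2*i)) := notMem_dyadic_right (by push_cast; linarith)
            have m3 : t ∉ dyadic (h+1) (2*(2*i-1)-1) :=
              notMem_dyadic_right (by push_cast; linarith)
            have m4 : t ∉ dyadic (h+1) (2*(2*i-1)) := notMem_dyadic_right (by push_cast; linarith)
            have m5 : t ∉ dyadic h (2*i-1) := notMem_dyadic_right (by push_cast; linarith)
            have m6 : t ∉ dyadic h (2*i) := notMem_dyadic_right (by push_cast; linarith)
            simp only [haar, hphi, m1, m2, m3, m4, m5, m6, if_false]
            norm_num
end

section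
/- If (k,j) ∈ 𝔻 is such that the support interval Δ_{k-1}^{(j)} is contained in Δ_{h+1}^{(4i-2)}, then χ_k^{(j)} ∘ φ_h^{(i)} = χ_k^{(j + 2^{k-h-2})}; symmetrically, if Δ_{k-1}^{(j)} ⊆ Δ_{h+1}^{(4i-1)}, then χ_k^{(j)} ∘ φ_h^{(i)} = χ_k^{(j − 2^{k-h-2})}. -/
open MeasureTheory Real Set
open scoped Classical

lemma dyadic_shift (k : ℕ) (m c : ℤ) (t : ℝ) :
    t + (c : ℝ) / 2 ^ k ∈ dyadic k m ↔ t ∈ dyadic k (m - c) := by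
  have e1 : (((m - c : ℤ) : ℝ) - 1) / 2 ^ k = ((m : ℝ) - 1) / 2 ^ k - (c : ℝ) / 2 ^ k := by
    push_cast; ring
  have e2 : ((m - c : ℤ) : ℝ) / 2 ^ k = (m : ℝ) / 2 ^ k - (c : ℝ) / 2 ^ k := by
    push_cast; ring
  simp only [dyadic, Set.mem_Ico, e1, e2]
  constructor <;> rintro ⟨a, b⟩ <;> constructor <;> linarith

lemma dyadic_inj (k : ℕ) (m m' : ℤ) (t : ℝ) (h1 : t ∈ dyadic k m) (h2 : t ∈ dyadic k m') :
    m = m' := by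
  have hp : (0:ℝ) < 2 ^ k := by positivity
  simp only [dyadic, Set.mem_Ico] at h1 h2
  have a1 : ((m:ℝ) - 1) / 2 ^ k < (m':ℝ) / 2 ^ k := lt_of_le_of_lt h1.1 h2.2
  have a2 : ((m':ℝ) - 1) / 2 ^ k < (m:ℝ) / 2 ^ k := lt_of_le_of_lt h2.1 h1.2
  rw [div_lt_div_iff₀ hp hp] at a1 a2
  have b1 : (m:ℝ) - 1 < m' := by nlinarith
  have b2 : (m':ℝ) - 1 < m := by nlinarith
  have c1 : m - 1 < m' := by exact_mod_cast b1
  have c2 : m' - 1 < m := by exact_mod_cast b2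
  omega

lemma haar_support (k : ℕ) (hk : 1 ≤ k) (j : ℤ) (t : ℝ) (ht : t ∉ dyadic (k - 1) j) :
    haar k j t = 0 := by
  have hp : (2:ℝ) ^ k = 2 ^ (k - 1) * 2 := by
    rw [← pow_succ]; congr 1; omega
  have hpos : (0:ℝ) < 2 ^ (k - 1) := by positivity
  have hne : (2:ℝ) ^ (k - 1) ≠ 0 := hpos.ne'
  simp only [dyadic, Set.mem_Ico, not_and, not_lt] at ht
  unfold haar
  rw [if_neg, if_neg]
  · intro hm
    simp only [dyadic, Set.mem_Ico] at hm
    push_cast at hm ht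
    rw [hp] at hm
    have e1 : (2 * (j:ℝ) - 1) / (2 ^ (k-1) * 2) = ((j:ℝ) - 1) / 2 ^ (k-1) + 1 / (2 ^ (k-1) * 2) := by
      field_simp; ring
    have e2 : (2 * (j:ℝ)) / (2 ^ (k-1) * 2) = (j:ℝ) / 2 ^ (k-1) := by
      field_simp
    have h1 : ((j:ℝ) - 1) / 2 ^ (k-1) ≤ t := by
      have : (0:ℝ) < 1 / (2 ^ (k-1) * 2) := by positivity
      nlinarith [hm.1]
    have := ht h1
    nlinarith [hm.2]
  · intro hm
    simp only [dyadic, Set.mem_Ico] at hm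
    push_cast at hm ht
    rw [hp] at hm
    have e1 : (2 * (j:ℝ) - 1 - 1) / (2 ^ (k-1) * 2) = ((j:ℝ) - 1) / 2 ^ (k-1) := by
      field_simp; ring
    have e2 : (2 * (j:ℝ) - 1) / (2 ^ (k-1) * 2) = (j:ℝ) / 2 ^ (k-1) - 1 / (2 ^ (k-1) * 2) := by
      field_simp
    have h1 : ((j:ℝ) - 1) / 2 ^ (k-1) ≤ t := by nlinarith [hm.1]
    have := ht h1
    have : (0:ℝ) < 1 / (2 ^ (k-1) * 2) := by positivity
    nlinarith [hm.2]

lemma phi_left (h : ℕ) (i : ℤ) (k : ℕ) (hk : 1 ≤ k) (j : ℤ)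
    (hsub : dyadic (k - 1) j ⊆ dyadic (h + 1) (4 * i - 2)) (t : ℝ) :
    haar k j (phi h i t) = haar k (j + 2 ^ (k - h - 2)) t := by
  have hBpos : (0:ℝ) < 2 ^ (k - 1) := by positivity
  have hApos : (0:ℝ) < 2 ^ (h + 1) := by positivity
  have hlt : ((j:ℝ) - 1) / 2 ^ (k - 1) < (j:ℝ) / 2 ^ (k - 1) := by gcongr; linarith
  obtain ⟨c1, c2⟩ := (Set.Ico_subset_Ico_iff hlt).mp hsub
  push_cast at c1 c2
  have hk2 : h + 2 ≤ k := by
    have hlen : (1:ℝ) / 2 ^ (k - 1) ≤ 1 / 2 ^ (h + 1) := by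
      have e1 : (j:ℝ) / 2 ^ (k-1) - ((j:ℝ) - 1) / 2 ^ (k-1) = 1 / 2 ^ (k-1) := by ring
      have e2 : (4*(i:ℝ) - 2) / 2 ^ (h+1) - (4*(i:ℝ) - 2 - 1) / 2 ^ (h+1) = 1 / 2 ^ (h+1) := by
        ring
      linarith
    rw [div_le_div_iff₀ hBpos hApos] at hlen
    have hpow : (2:ℝ) ^ (h + 1) ≤ 2 ^ (k - 1) := by linarith
    have := (pow_le_pow_iff_right₀ (by norm_num : (1:ℝ) < 2)).mp hpow
    omega
  set r := k - h - 2 with hrdef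
  have hK : (2:ℝ) ^ (k - 1) = 2 ^ (h + 1) * 2 ^ r := by
    rw [← pow_add]; congr 1; omega
  have hk' : (2:ℝ) ^ k = 2 ^ (h + 1) * 2 ^ r * 2 := by
    rw [show k = (h + 1) + r + 1 by omega, pow_succ, pow_add]
  have hAne : (2:ℝ) ^ (h + 1) ≠ 0 := hApos.ne'
  have hrpos : (0:ℝ) < 2 ^ r := by positivity
  have hrne : (2:ℝ) ≠ 0 := by norm_num
  have hs2 : ((-(2 * 2 ^ r) : ℤ) : ℝ) / 2 ^ k = -(1 / 2 ^ (h + 1)) := by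
    rw [hk']; push_cast; field_simp <;> ring
  have hs1 : ((-(2 ^ r) : ℤ) : ℝ) / 2 ^ (k - 1) = -(1 / 2 ^ (h + 1)) := by
    rw [hK]; push_cast; field_simp <;> ring
  by_cases hA : t ∈ dyadic (k - 1) (j + 2 ^ r)
  · have hAm := hA
    simp only [dyadic, Set.mem_Ico] at hAm
    push_cast at hAm
    have f1 : ((j:ℝ) + 2 ^ r - 1) / 2 ^ (k - 1)
        = ((j:ℝ) - 1) / 2 ^ (k - 1) + 1 / 2 ^ (h + 1) := by
      rw [hK]; field_simp <;> ring
    have f2 : ((j:ℝ) + 2 ^ r) / 2 ^ (k - 1) = (j:ℝ) / 2 ^ (k - 1) + 1 / 2 ^ (h + 1) := by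
      rw [hK]; field_simp <;> ring
    have htR : t ∈ dyadic (h + 1) (4 * i - 1) := by
      simp only [dyadic, Set.mem_Ico]
      push_cast
      constructor
      · have e : (4 * (i:ℝ) - 1 - 1) / 2 ^ (h + 1)
            = (4 * (i:ℝ) - 2 - 1) / 2 ^ (h + 1) + 1 / 2 ^ (h + 1) := by ring
        linarith [hAm.1]
      · have e : (4 * (i:ℝ) - 1) / 2 ^ (h + 1)
            = (4 * (i:ℝ) - 2) / 2 ^ (h + 1) + 1 / 2 ^ (h + 1) := by ring
        linarith [hAm.2]
    have htL : t ∉ dyadic (h + 1) (4 * i - 2) := by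
      intro hx
      have := dyadic_inj (h+1) _ _ t hx htR
      omega
    have hphi : phi h i t = t - 1 / 2 ^ (h + 1) := by
      unfold phi; rw [if_neg htL, if_pos htR]
    rw [hphi]
    have hts : t - 1 / 2 ^ (h + 1) = t + ((-(2 * 2 ^ r) : ℤ) : ℝ) / 2 ^ k := by
      rw [hs2]; ring
    rw [hts]
    unfold haar
    rw [dyadic_shift, dyadic_shift,
      show 2 * j - 1 - -(2 * 2 ^ r) = 2 * (j + 2 ^ r) - 1 by ring,
      show 2 * j - -(2 * 2 ^ r) = 2 * (j + 2 ^ r) by ring]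
  · have hRHS : haar k (j + 2 ^ r) t = 0 := haar_support k hk _ t hA
    rw [hRHS]
    apply haar_support k hk
    intro hmem
    by_cases h1 : t ∈ dyadic (h + 1) (4 * i - 2)
    · have hphi : phi h i t = t + 1 / 2 ^ (h + 1) := by unfold phi; rw [if_pos h1]
      rw [hphi] at hmem
      have hmv : t + 1 / 2 ^ (h + 1) ∈ dyadic (h + 1) (4 * i - 1) := by
        have e : t + 1 / 2 ^ (h + 1) = t + ((1:ℤ):ℝ) / 2 ^ (h + 1) := by norm_num
        rw [e, dyadic_shift, show 4 * i - 1 - 1 = 4 * i - 2 by ring]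
        exact h1
      have := dyadic_inj (h+1) _ _ _ (hsub hmem) hmv
      omega
    · by_cases h2 : t ∈ dyadic (h + 1) (4 * i - 1)
      · have hphi : phi h i t = t - 1 / 2 ^ (h + 1) := by
          unfold phi; rw [if_neg h1, if_pos h2]
        rw [hphi] at hmem
        apply hA
        have hts : t - 1 / 2 ^ (h + 1) = t + ((-(2 ^ r) : ℤ) : ℝ) / 2 ^ (k - 1) := by
          rw [hs1]; ring
        rw [hts, dyadic_shift, show j - -(2 ^ r) = j + 2 ^ r by ring] at hmem
        exact hmem
      · have hphi : phi h i t = t := by unfold phi; rw [if_neg h1, if_neg h2]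
        rw [hphi] at hmem
        exact h1 (hsub hmem)

lemma phi_phi (h : ℕ) (i : ℤ) (t : ℝ) : phi h i (phi h i t) = t := by
  by_cases h1 : t ∈ dyadic (h + 1) (4 * i - 2)
  · have hmv : t + 1 / 2 ^ (h + 1) ∈ dyadic (h + 1) (4 * i - 1) := by
      have e : t + 1 / 2 ^ (h + 1) = t + ((1:ℤ):ℝ) / 2 ^ (h + 1) := by norm_num
      rw [e, dyadic_shift, show 4 * i - 1 - 1 = 4 * i - 2 by ring]
      exact h1
    have hnot : t + 1 / 2 ^ (h + 1) ∉ dyadic (h + 1) (4 * i - 2) := by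
      intro hx
      have := dyadic_inj (h + 1) _ _ _ hx hmv
      omega
    unfold phi
    rw [if_pos h1, if_neg hnot, if_pos hmv]
    ring
  · by_cases h2 : t ∈ dyadic (h + 1) (4 * i - 1)
    · have hmv : t - 1 / 2 ^ (h + 1) ∈ dyadic (h + 1) (4 * i - 2) := by
        have e : t - 1 / 2 ^ (h + 1) = t + ((-1:ℤ):ℝ) / 2 ^ (h + 1) := by push_cast; ring
        rw [e, dyadic_shift, show 4 * i - 2 - -1 = 4 * i - 1 by ring]
        exact h2
      unfold phi
      rw [if_neg h1, if_pos h2, if_pos hmv]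
      ring
    · unfold phi
      rw [if_neg h1, if_neg h2, if_neg h1, if_neg h2]

lemma sub_shift (h : ℕ) (i : ℤ) (k : ℕ) (hk : 1 ≤ k) (j : ℤ)
    (hsub : dyadic (k - 1) j ⊆ dyadic (h + 1) (4 * i - 1)) :
    dyadic (k - 1) (j - 2 ^ (k - h - 2)) ⊆ dyadic (h + 1) (4 * i - 2) := by
  have hBpos : (0:ℝ) < 2 ^ (k - 1) := by positivity
  have hApos : (0:ℝ) < 2 ^ (h + 1) := by positivity
  have hlt : ((j:ℝ) - 1) / 2 ^ (k - 1) < (j:ℝ) / 2 ^ (k - 1) := by gcongr; linarith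
  obtain ⟨c1, c2⟩ := (Set.Ico_subset_Ico_iff hlt).mp hsub
  push_cast at c1 c2
  have hk2 : h + 2 ≤ k := by
    have hlen : (1:ℝ) / 2 ^ (k - 1) ≤ 1 / 2 ^ (h + 1) := by
      have e1 : (j:ℝ) / 2 ^ (k-1) - ((j:ℝ) - 1) / 2 ^ (k-1) = 1 / 2 ^ (k-1) := by ring
      have e2 : (4*(i:ℝ) - 1) / 2 ^ (h+1) - (4*(i:ℝ) - 1 - 1) / 2 ^ (h+1) = 1 / 2 ^ (h+1) := by
        ring
      linarith
    rw [div_le_div_iff₀ hBpos hApos] at hlen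
    have hpow : (2:ℝ) ^ (h + 1) ≤ 2 ^ (k - 1) := by linarith
    have := (pow_le_pow_iff_right₀ (by norm_num : (1:ℝ) < 2)).mp hpow
    omega
  set r := k - h - 2 with hrdef
  have hK : (2:ℝ) ^ (k - 1) = 2 ^ (h + 1) * 2 ^ r := by
    rw [← pow_add]; congr 1; omega
  have hAne : (2:ℝ) ^ (h + 1) ≠ 0 := hApos.ne'
  have hrpos : (0:ℝ) < 2 ^ r := by positivity
  show Set.Ico _ _ ⊆ Set.Ico _ _
  apply Set.Ico_subset_Ico
  · push_cast
    have f1 : ((j:ℝ) - 2 ^ r - 1) / 2 ^ (k - 1)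
        = ((j:ℝ) - 1) / 2 ^ (k - 1) - 1 / 2 ^ (h + 1) := by
      rw [hK]; field_simp; ring
    have e : (4 * (i:ℝ) - 2 - 1) / 2 ^ (h + 1)
        = (4 * (i:ℝ) - 1 - 1) / 2 ^ (h + 1) - 1 / 2 ^ (h + 1) := by ring
    linarith
  · push_cast
    have f2 : ((j:ℝ) - 2 ^ r) / 2 ^ (k - 1) = (j:ℝ) / 2 ^ (k - 1) - 1 / 2 ^ (h + 1) := by
      rw [hK]; field_simp
    have e : (4 * (i:ℝ) - 2) / 2 ^ (h + 1)
        = (4 * (i:ℝ) - 1) / 2 ^ (h + 1) - 1 / 2 ^ (h + 1) := by ring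
    linarith


theorem haar_comp_phi_subtree (h : ℕ) (i : ℤ) (hhi : memD (h, i))
    (k : ℕ) (j : ℤ) (hkj : memD (k, j)) :
    (dyadic (k - 1) j ⊆ dyadic (h + 1) (4 * i - 2) →
      ∀ t ∈ Set.Ico (0 : ℝ) 1,
        haar k j (phi h i t) = haar k (j + 2 ^ (k - h - 2)) t) ∧
    (dyadic (k - 1) j ⊆ dyadic (h + 1) (4 * i - 1) →
      ∀ t ∈ Set.Ico (0 : ℝ) 1,
        haar k j (phi h i t) = haar k (j - 2 ^ (k - h - 2)) t) := by
  have hk : 1 ≤ k := hkj.1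
  constructor
  · intro hsub t _
    exact phi_left h i k hk j hsub t
  · intro hsub t _
    have hsub' := sub_shift h i k hk j hsub
    have h1 := phi_left h i k hk (j - 2 ^ (k - h - 2)) hsub' (phi h i t)
    rw [phi_phi, show j - 2 ^ (k - h - 2) + 2 ^ (k - h - 2) = j by ring] at h1
    exact h1.symm
end
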